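/- For every integer j ≥ 2 and all p_1, p_2 ∈ (0,1] with p_1 ≠ p_2, one has f_{2,j}(p_1, p_2) > f_{2,j}( (p_1 + p_2)/2, (p_1 + p_2)/2 ). -/

import Mathlib

open MeasureTheory

/-- The law of a geometric random variable with success probability `p`,
supported on the positive integers: `P(Y = k) = (1 - p)^(k-1) * p` for `k ≥ 1`. -/
noncomputable def geomMeasure (p : ℝ) : Measure ℕ :=
  Measure.count.withDensity
    (fun k => if 1 ≤ k then ENNReal.ofReal ((1 - p) ^ (k - 1) * p) else 0)

/-- `f_{m,j}(p_1, …, p_m) = P(Y_1 + ⋯ + Y_m > j)` where `Y_1, …, Y_m` are independent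
with `Y_i ~ Geom(p_i)`; realized via the product of the geometric laws. -/
noncomputable def geomF (m j : ℕ) (p : Fin m → ℝ) : ENNReal :=
  Measure.pi (fun i => geomMeasure (p i)) {x | j < ∑ i, x i}

/-!
In the failure probabilities `x = 1 - p₁`, `y = 1 - p₂`, conditioning on `Y₁` gives
`f_{2,j} = x^j + (1 - x) h(x, y)` with `h(x, y) = ∑_{i<j} x^i y^(j-1-i)`, and since
`(x - y) h(x, y) = x^j - y^j` this symmetrizes to `2 f_{2,j} = x^j + y^j + (2 - x - y) h(x, y)`.
For fixed `x + y = 2q`, strict convexity of `t ↦ t^j` (`j ≥ 2`) gives `x^j + y^j > 2 q^j`, and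
`h(x, y) ≥ j q^(j-1) = h(q, q)` is a Hermite–Hadamard inequality for `t ↦ t^(j-1)`.
-/

open Finset

noncomputable def sumTwoGeomTail (j : ℕ) (x y : ℝ) : ℝ :=
  x ^ j + (1 - x) * ∑ i ∈ range j, x ^ i * y ^ (j - 1 - i)

/-- The two bounds are proved together because each induction step of either one uses the other. -/
theorem add_pow_sub_sub_pow_bounds {q : ℝ} (hq : 0 ≤ q) (d : ℝ) (m : ℕ) :
    2 * (m + 1) * q ^ m * d ^ 2 ≤ ((q + d) ^ (m + 1) - (q - d) ^ (m + 1)) * d ∧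
      2 * q ^ (m + 1) ≤ (q + d) ^ (m + 1) + (q - d) ^ (m + 1) := by
  induction m with
  | zero => constructor <;> ring_nf <;> rfl
  | succ m ih =>
    obtain ⟨hdiff, hsum⟩ := ih
    have hdiff_nonneg : 0 ≤ ((q + d) ^ (m + 1) - (q - d) ^ (m + 1)) * d :=
      le_trans (by positivity) hdiff
    rw [pow_succ' (q + d), pow_succ' (q - d)]
    push_cast
    exact ⟨by linear_combination q * hdiff + d ^ 2 * hsum,
      by linear_combination q * hsum + hdiff_nonneg⟩

theorem natCast_mul_midpoint_pow_le_geom_sum₂ {x y : ℝ} (hx : 0 ≤ x) (hy : 0 ≤ y) (n : ℕ) :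
    n * ((x + y) / 2) ^ (n - 1) ≤ ∑ i ∈ range n, x ^ i * y ^ (n - 1 - i) := by
  rcases eq_or_ne x y with rfl | hne
  · rw [geom_sum₂_self, add_self_div_two]
  obtain _ | m := n
  · simp
  have hd : 0 < 2 * ((x - y) / 2) ^ 2 := by
    have : x - y ≠ 0 := sub_ne_zero.mpr hne
    positivity
  have h := (add_pow_sub_sub_pow_bounds (by positivity : 0 ≤ (x + y) / 2) ((x - y) / 2) m).1
  rw [show (x + y) / 2 + (x - y) / 2 = x by ring, show (x + y) / 2 - (x - y) / 2 = y by ring,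
    ← geom_sum₂_mul] at h
  simp only [Nat.cast_add, Nat.cast_one, add_tsub_cancel_right] at h ⊢
  refine le_of_mul_le_mul_right ?_ hd
  linear_combination h

theorem sumTwoGeomTail_nonneg (j : ℕ) {x y : ℝ} (hx : 0 ≤ x) (hx₁ : x ≤ 1) (hy : 0 ≤ y) :
    0 ≤ sumTwoGeomTail j x y :=
  add_nonneg (pow_nonneg hx j)
    (mul_nonneg (sub_nonneg.2 hx₁) (sum_nonneg fun _ _ => by positivity))

theorem sumTwoGeomTail_midpoint_lt {j : ℕ} (hj : 2 ≤ j) {x y : ℝ} (hx : 0 ≤ x) (hy : 0 ≤ y)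
    (hxy : x + y ≤ 2) (hne : x ≠ y) :
    sumTwoGeomTail j ((x + y) / 2) ((x + y) / 2) < sumTwoGeomTail j x y := by
  have hconv : ((x + y) / 2) ^ j < (x ^ j + y ^ j) / 2 := by
    have := (strictConvexOn_pow hj).2 (Set.mem_Ici.2 hx) (Set.mem_Ici.2 hy) hne
      (by norm_num : (0 : ℝ) < 1 / 2) (by norm_num : (0 : ℝ) < 1 / 2) (by norm_num)
    simp only [smul_eq_mul] at this
    rw [show 1 / 2 * x + 1 / 2 * y = (x + y) / 2 by ring] at this
    linarith
  have hmid := natCast_mul_midpoint_pow_le_geom_sum₂ hx hy j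
  have hsymm : 2 * sumTwoGeomTail j x y =
      x ^ j + y ^ j + (2 - x - y) * ∑ i ∈ range j, x ^ i * y ^ (j - 1 - i) := by
    rw [sumTwoGeomTail]
    linear_combination (-1 : ℝ) * geom_sum₂_mul x y j
  rw [sumTwoGeomTail, geom_sum₂_self]
  nlinarith [mul_le_mul_of_nonneg_left hmid (by linarith : 0 ≤ 2 - x - y)]

section Distribution

theorem sum_range_one_sub_pow_mul (p : ℝ) (n : ℕ) :
    ∑ k ∈ range n, (1 - p) ^ k * p = 1 - (1 - p) ^ n := by
  rw [← sum_mul]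
  linear_combination (-1 : ℝ) * geom_sum_mul (1 - p) n

variable {p : ℝ}

theorem one_sub_pow_mul_nonneg (hp : p ∈ Set.Icc 0 1) (k : ℕ) : 0 ≤ (1 - p) ^ k * p :=
  mul_nonneg (pow_nonneg (sub_nonneg.2 hp.2) k) hp.1

theorem one_sub_pow_le_one (hp : p ∈ Set.Icc 0 1) (k : ℕ) : (1 - p) ^ k ≤ 1 :=
  pow_le_one₀ (sub_nonneg.2 hp.2) (by linarith [hp.1])

theorem geomMeasure_singleton_zero (p : ℝ) : geomMeasure p {0} = 0 := by
  simp [geomMeasure, withDensity_apply _ (measurableSet_singleton _)]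

theorem geomMeasure_singleton_succ (p : ℝ) (k : ℕ) :
    geomMeasure p {k + 1} = ENNReal.ofReal ((1 - p) ^ k * p) := by
  simp [geomMeasure, withDensity_apply _ (measurableSet_singleton _)]

theorem isProbabilityMeasure_geomMeasure (hp : p ∈ Set.Ioc 0 1) :
    IsProbabilityMeasure (geomMeasure p) := by
  have hsum : HasSum (fun k : ℕ => (1 - p) ^ k * p) 1 := by
    have := (hasSum_geometric_of_lt_one (r := 1 - p) (by linarith [hp.2])
      (by linarith [hp.1])).mul_right p
    rwa [sub_sub_cancel, inv_mul_cancel₀ hp.1.ne'] at this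
  constructor
  rw [← lintegral_one, lintegral_countable', tsum_eq_zero_add' ENNReal.summable]
  simp only [one_mul, geomMeasure_singleton_zero, geomMeasure_singleton_succ, zero_add]
  rw [← ENNReal.ofReal_tsum_of_nonneg (one_sub_pow_mul_nonneg (Set.Ioc_subset_Icc_self hp))
    hsum.summable, hsum.tsum_eq, ENNReal.ofReal_one]

theorem geomMeasure_Iic (hp : p ∈ Set.Icc 0 1) (n : ℕ) :
    geomMeasure p (Set.Iic n) = ENNReal.ofReal (1 - (1 - p) ^ n) := by
  rw [← Finset.coe_Iic, ← sum_measure_singleton, ← Nat.range_succ_eq_Iic, sum_range_succ']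
  simp only [geomMeasure_singleton_succ, geomMeasure_singleton_zero, add_zero]
  rw [← ENNReal.ofReal_sum_of_nonneg fun k _ => one_sub_pow_mul_nonneg hp k,
    sum_range_one_sub_pow_mul]

end Distribution

theorem prod_geomMeasure_sum_le {a b : ℝ} (ha : a ∈ Set.Icc 0 1) (hb : b ∈ Set.Icc 0 1)
    (j : ℕ) :
    (geomMeasure a).prod (geomMeasure b) {z | z.1 + z.2 ≤ j} =
      ENNReal.ofReal (∑ i ∈ range j, (1 - (1 - b) ^ (j - 1 - i)) * ((1 - a) ^ i * a)) := by
  have hcdf (n : ℕ) : 0 ≤ 1 - (1 - b) ^ n := sub_nonneg.2 (one_sub_pow_le_one hb n)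
  rw [Measure.prod_apply (by measurability), lintegral_countable',
    tsum_eq_sum (s := range (j + 1)) ?_, sum_range_succ', geomMeasure_singleton_zero, mul_zero,
    add_zero, ENNReal.ofReal_sum_of_nonneg fun k _ =>
      mul_nonneg (hcdf _) (one_sub_pow_mul_nonneg ha k)]
  · refine sum_congr rfl fun k hk => ?_
    have hslice : Prod.mk (k + 1) ⁻¹' {z : ℕ × ℕ | z.1 + z.2 ≤ j} = Set.Iic (j - 1 - k) := by
      ext; simp only [Set.mem_preimage, Set.mem_ofPred_eq, Set.mem_Iic]; grind
    rw [hslice, geomMeasure_Iic hb, geomMeasure_singleton_succ, ← ENNReal.ofReal_mul (hcdf _)]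
  · intro k hk
    have hslice : Prod.mk k ⁻¹' {z : ℕ × ℕ | z.1 + z.2 ≤ j} = ∅ := by
      ext; simp only [Set.mem_preimage, Set.mem_ofPred_eq, Set.mem_empty_iff_false]; grind
    rw [hslice, measure_empty, zero_mul]

theorem one_sub_sumTwoGeomTail (a b : ℝ) (j : ℕ) :
    1 - sumTwoGeomTail j (1 - a) (1 - b) =
      ∑ i ∈ range j, (1 - (1 - b) ^ (j - 1 - i)) * ((1 - a) ^ i * a) := by
  simp only [sumTwoGeomTail, sub_sub_cancel, mul_sum, sub_mul, one_mul, sum_sub_distrib,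
    sum_range_one_sub_pow_mul]
  ring_nf

theorem geomF_two_eq {a b : ℝ} (ha : a ∈ Set.Ioc 0 1) (hb : b ∈ Set.Ioc 0 1) (j : ℕ) :
    geomF 2 j ![a, b] = ENNReal.ofReal (sumTwoGeomTail j (1 - a) (1 - b)) := by
  have := isProbabilityMeasure_geomMeasure ha
  have := isProbabilityMeasure_geomMeasure hb
  have hlaw : (fun i => geomMeasure (![a, b] i)) = ![geomMeasure a, geomMeasure b] := by
    ext1 i; fin_cases i <;> rfl
  have hevent : {x : Fin 2 → ℕ | j < ∑ i, x i} =
      MeasurableEquiv.finTwoArrow ⁻¹' {z : ℕ × ℕ | z.1 + z.2 ≤ j}ᶜ := by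
    ext x; simp [Fin.sum_univ_two]
  have hlow : 0 ≤ ∑ i ∈ range j, (1 - (1 - b) ^ (j - 1 - i)) * ((1 - a) ^ i * a) :=
    sum_nonneg fun i _ => mul_nonneg (sub_nonneg.2 (one_sub_pow_le_one
      (Set.Ioc_subset_Icc_self hb) _)) (one_sub_pow_mul_nonneg (Set.Ioc_subset_Icc_self ha) i)
  rw [geomF, hlaw, hevent, (measurePreserving_finTwoArrow_vec _ _).measure_preimage_equiv,
    measure_compl (by measurability) (measure_ne_top _ _), measure_univ,
    prod_geomMeasure_sum_le (Set.Ioc_subset_Icc_self ha) (Set.Ioc_subset_Icc_self hb),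
    ← ENNReal.ofReal_one, ← ENNReal.ofReal_sub _ hlow, ← one_sub_sumTwoGeomTail, sub_sub_cancel]

theorem geomF_two_strict_gt_avg
    (j : ℕ) (hj : 2 ≤ j)
    (p₁ p₂ : ℝ) (hp₁ : p₁ ∈ Set.Ioc (0 : ℝ) 1) (hp₂ : p₂ ∈ Set.Ioc (0 : ℝ) 1)
    (hne : p₁ ≠ p₂) :
    geomF 2 j ![(p₁ + p₂) / 2, (p₁ + p₂) / 2] < geomF 2 j ![p₁, p₂] := by
  have hmid : (p₁ + p₂) / 2 ∈ Set.Ioc (0 : ℝ) 1 :=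
    ⟨by linarith [hp₁.1, hp₂.1], by linarith [hp₁.2, hp₂.2]⟩
  have hlt := sumTwoGeomTail_midpoint_lt hj (x := 1 - p₁) (y := 1 - p₂)
    (by linarith [hp₁.2]) (by linarith [hp₂.2]) (by linarith [hp₁.1, hp₂.1])
    (fun h => hne (by linarith))
  rw [show (1 - p₁ + (1 - p₂)) / 2 = 1 - (p₁ + p₂) / 2 by ring] at hlt
  have hq : 0 ≤ 1 - (p₁ + p₂) / 2 := by linarith [hmid.2]
  rw [geomF_two_eq hmid hmid, geomF_two_eq hp₁ hp₂,
    ENNReal.ofReal_lt_ofReal_iff_of_nonneg (sumTwoGeomTail_nonneg j hq (by linarith [hmid.1]) hq)]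
  exact hlt
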